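/- Fix an integer n ≥ 1 and integers ℓ, m with 0 ≤ m ≤ ℓ and 2ℓ ≤ n. Then c(w_ℓ) + c(w_{n−ℓ}) − c(w_m + w_{n−m}) + ⟨w_ℓ, w_{n−ℓ}⟩ = (ℓ − m)(n − ℓ − m) + (ℓ − m); in particular this geometrically normalized equivariant degree shift C_m^X is an integer. (This reproduces the grading shifts of Kamnitzer's derived equivalence for stratified Mukai flops of cotangent bundles of Grassmannians.) -/

import Mathlib

open RealInnerProductSpace

/-- The `a`-th fundamental weight of `sl_n`:
`w_a = (∑_{i=1}^{a} e_i) − (a/n)·(∑_{i=1}^{n} e_i)`. -/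
noncomputable def fundWeight (n a : ℕ) : EuclideanSpace ℝ (Fin n) :=
  (WithLp.equiv 2 (Fin n → ℝ)).symm
    (fun i => (if (i : ℕ) + 1 ≤ a then (1 : ℝ) else 0) - (a : ℝ) / (n : ℝ))

/-- The Weyl vector `ρ = ∑_{i=1}^{n} ((n+1)/2 − i)·e_i`. -/
noncomputable def weylVector (n : ℕ) : EuclideanSpace ℝ (Fin n) :=
  (WithLp.equiv 2 (Fin n → ℝ)).symm
    (fun i => ((n : ℝ) + 1) / 2 - (((i : ℕ) : ℝ) + 1))

/-- The classical dimension `d(μ) = ⟨μ, ρ⟩`. -/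
noncomputable def classicalDim (n : ℕ) (μ : EuclideanSpace ℝ (Fin n)) : ℝ :=
  ⟪μ, weylVector n⟫

/-- The conformal-dimension prefactor `c(μ) = (1/2)·⟨μ, μ + 2ρ⟩`. -/
noncomputable def confDim (n : ℕ) (μ : EuclideanSpace ℝ (Fin n)) : ℝ :=
  (1 / 2) * ⟪μ, μ + (2 : ℝ) • weylVector n⟫

/-!
Write `w_a = p_a - (a/n) • p_n`, where `p_a = e_1 + ⋯ + e_a`. Since `⟨p_a, p_b⟩ = min a b` and
`⟨p_a, ρ⟩ = a(n-a)/2`, bilinearity gives `⟨w_a, w_b⟩ = a - ab/n` for `a ≤ b ≤ n` and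
`⟨w_a, ρ⟩ = a(n-a)/2`. Hence `c(w_a) = a(n-a)/(2n) + a(n-a)/2` and, as `2m ≤ n`,
`c(w_m + w_{n-m}) = m + m(n-m)`; in the combination of the theorem the `1/n` terms cancel.
-/

noncomputable def prefixOnes (n a : ℕ) : EuclideanSpace ℝ (Fin n) :=
  WithLp.toLp 2 fun i => if (i : ℕ) + 1 ≤ a then (1 : ℝ) else 0

lemma Fin.sum_ite_succ_le {M : Type*} [AddCommMonoid M] {n a : ℕ} (h : a ≤ n) (f : ℕ → M) :
    ∑ i : Fin n, (if (i : ℕ) + 1 ≤ a then f i else 0) = ∑ i ∈ Finset.range a, f i := by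
  rw [Fin.sum_univ_eq_sum_range (fun i => if i + 1 ≤ a then f i else 0), ← Finset.sum_filter]
  congr 1
  ext i
  simp only [Finset.mem_filter, Finset.mem_range]
  omega

lemma fundWeight_eq_sub (n a : ℕ) :
    fundWeight n a = prefixOnes n a - ((a : ℝ) / n) • prefixOnes n n := by
  ext i
  simp [fundWeight, prefixOnes]

lemma inner_prefixOnes {n a : ℕ} (b : ℕ) (ha : a ≤ n) :
    ⟪prefixOnes n a, prefixOnes n b⟫ = min a b := by
  have hprod : ∀ i : ℕ, ((if i + 1 ≤ b then (1 : ℝ) else 0) * if i + 1 ≤ a then 1 else 0) =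
      if i + 1 ≤ min a b then 1 else 0 := by
    intro i
    simp only [le_min_iff, mul_ite, mul_one, mul_zero, ite_and]
  simp only [prefixOnes, PiLp.inner_apply, RCLike.inner_apply, conj_trivial, hprod]
  rw [Fin.sum_ite_succ_le (min_le_of_left_le ha) (fun _ => (1 : ℝ))]
  simp

lemma sum_range_weylCoord (n a : ℕ) :
    ∑ i ∈ Finset.range a, (((n : ℝ) + 1) / 2 - ((i : ℝ) + 1)) = a * ((n : ℝ) - a) / 2 := by
  induction a with
  | zero => simp
  | succ a ih => rw [Finset.sum_range_succ, ih]; push_cast; ring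

lemma inner_prefixOnes_weylVector {n a : ℕ} (ha : a ≤ n) :
    ⟪prefixOnes n a, weylVector n⟫ = a * ((n : ℝ) - a) / 2 := by
  simp only [prefixOnes, weylVector, PiLp.inner_apply, RCLike.inner_apply, conj_trivial, mul_ite,
    mul_one, mul_zero, WithLp.equiv_symm_apply]
  rw [Fin.sum_ite_succ_le ha (fun i => ((n : ℝ) + 1) / 2 - ((i : ℝ) + 1)), sum_range_weylCoord]

lemma inner_fundWeight_of_le {n a b : ℕ} (hn : n ≠ 0) (hab : a ≤ b) (hb : b ≤ n) :
    ⟪fundWeight n a, fundWeight n b⟫ = a - a * b / n := by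
  simp only [fundWeight_eq_sub, inner_sub_left, inner_sub_right, real_inner_smul_left,
    real_inner_smul_right, inner_prefixOnes _ (hab.trans hb),
    inner_prefixOnes _ le_rfl, min_eq_left hab, min_eq_left (hab.trans hb), min_eq_right hb, min_self]
  field_simp
  ring

lemma inner_fundWeight_weylVector {n a : ℕ} (ha : a ≤ n) :
    ⟪fundWeight n a, weylVector n⟫ = a * ((n : ℝ) - a) / 2 := by
  simp [fundWeight_eq_sub, inner_sub_left, real_inner_smul_left, inner_prefixOnes_weylVector ha,
    inner_prefixOnes_weylVector le_rfl]

lemma confDim_eq (n : ℕ) (μ : EuclideanSpace ℝ (Fin n)) :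
    confDim n μ = ⟪μ, μ⟫ / 2 + ⟪μ, weylVector n⟫ := by
  rw [confDim, inner_add_right, real_inner_smul_right]
  ring

lemma confDim_fundWeight {n a : ℕ} (hn : n ≠ 0) (ha : a ≤ n) :
    confDim n (fundWeight n a) = a * ((n : ℝ) - a) / (2 * n) + a * ((n : ℝ) - a) / 2 := by
  rw [confDim_eq, inner_fundWeight_of_le hn le_rfl ha, inner_fundWeight_weylVector ha]
  field_simp

lemma confDim_fundWeight_add_fundWeight_sub {n m : ℕ} (hn : n ≠ 0) (hm : 2 * m ≤ n) :
    confDim n (fundWeight n m + fundWeight n (n - m)) = m + m * ((n : ℝ) - m) := by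
  have hmn : m ≤ n - m := by omega
  have hnm : n - m ≤ n := Nat.sub_le n m
  rw [confDim_eq, real_inner_add_add_self, inner_add_left,
    inner_fundWeight_of_le hn le_rfl (hmn.trans hnm), inner_fundWeight_of_le hn hmn hnm,
    inner_fundWeight_of_le hn le_rfl hnm, inner_fundWeight_weylVector (hmn.trans hnm),
    inner_fundWeight_weylVector hnm, Nat.cast_sub (hmn.trans hnm)]
  field_simp
  ring

/-- `c(w_ℓ) + c(w_{n−ℓ}) − c(w_m + w_{n−m}) + ⟨w_ℓ, w_{n−ℓ}⟩ = (ℓ − m)(n − ℓ − m) + (ℓ − m)`;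
in particular this geometrically normalized equivariant degree shift `C_m^X` is an integer. -/
theorem stmt2 (n ℓ m : ℕ) (hn : 1 ≤ n) (hm : m ≤ ℓ) (hℓ : 2 * ℓ ≤ n) :
    (confDim n (fundWeight n ℓ) + confDim n (fundWeight n (n - ℓ)) -
        confDim n (fundWeight n m + fundWeight n (n - m)) +
        ⟪fundWeight n ℓ, fundWeight n (n - ℓ)⟫ =
      ((ℓ : ℝ) - (m : ℝ)) * ((n : ℝ) - (ℓ : ℝ) - (m : ℝ)) + ((ℓ : ℝ) - (m : ℝ))) ∧
    ∃ z : ℤ, confDim n (fundWeight n ℓ) + confDim n (fundWeight n (n - ℓ)) -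
        confDim n (fundWeight n m + fundWeight n (n - m)) +
        ⟪fundWeight n ℓ, fundWeight n (n - ℓ)⟫ = (z : ℝ) := by
  have hn0 : n ≠ 0 := by omega
  have shift : confDim n (fundWeight n ℓ) + confDim n (fundWeight n (n - ℓ)) -
      confDim n (fundWeight n m + fundWeight n (n - m)) +
      ⟪fundWeight n ℓ, fundWeight n (n - ℓ)⟫ =
      ((ℓ : ℝ) - (m : ℝ)) * ((n : ℝ) - (ℓ : ℝ) - (m : ℝ)) + ((ℓ : ℝ) - (m : ℝ)) := by
    rw [confDim_fundWeight hn0 (by omega), confDim_fundWeight hn0 (by omega),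
      confDim_fundWeight_add_fundWeight_sub hn0 (by omega),
      inner_fundWeight_of_le hn0 (by omega) (by omega), Nat.cast_sub (by omega)]
    field_simp
    ring
  refine ⟨shift, ((ℓ : ℤ) - m) * ((n : ℤ) - ℓ - m) + ((ℓ : ℤ) - m), ?_⟩
  rw [shift]
  push_cast
  ring
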